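/- Let A be an m×n real matrix, b ∈ ℝᵐ, x ∈ ℝⁿ, and let x* ∈ ℝⁿ satisfy A x* ≤ b componentwise. Suppose γ > 0 satisfies the Hoffman-type bound (γ/2)·‖x − x*‖² ≤ ‖(Ax − b)₊‖². Then ‖(Ax − b)₊‖² + (γ/2)·‖x − x*‖² ≤ 2·⟨Aᵀ(Ax − b)₊, x − x*⟩. In particular, the function f(x) = (1/2)‖(Ax − b)₊‖², whose gradient is Aᵀ(Ax − b)₊, satisfies the quasi strong convexity condition f(x) − f(x*) ≤ ⟨∇f(x), x − x*⟩ − (γ/4)‖x − x*‖². (Remark: the hinge-squared loss of a feasible linear system satisfies Assumption 1.) -/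

import Mathlib

open Matrix BigOperators

/-- Reinterpret a plain vector as an element of Euclidean space. -/
noncomputable def toEuc {k : ℕ} (v : Fin k → ℝ) : EuclideanSpace ℝ (Fin k) := WithLp.toLp 2 v

/-- The componentwise positive part `(A x - b)₊` of the residual. -/
noncomputable def posRes {m n : ℕ} (A : Matrix (Fin m) (Fin n) ℝ) (b : Fin m → ℝ)
    (x : EuclideanSpace ℝ (Fin n)) : EuclideanSpace ℝ (Fin m) :=
  WithLp.toLp 2 (fun i => max 0 (A.mulVec x i - b i))

/-- The objective `f(x) = (1/2) ‖(A x - b)₊‖²`. -/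
noncomputable def hingeSq {m n : ℕ} (A : Matrix (Fin m) (Fin n) ℝ) (b : Fin m → ℝ)
    (x : EuclideanSpace ℝ (Fin n)) : ℝ :=
  (1 / 2) * ‖posRes A b x‖ ^ 2

/-!
Feasibility of `x*` gives `(A x - b)ᵢ ≤ (A (x - x*))ᵢ`; multiplying by the nonnegative
`((A x - b)₊)ᵢ` and summing yields `‖(A x - b)₊‖² ≤ ⟨Aᵀ (A x - b)₊, x - x*⟩`.
Adding the Hoffman-type bound gives the first inequality, and `f(x*) = 0` turns it into the
second.
-/

theorem inner_toEuc_transpose_mulVec {m n : ℕ} (A : Matrix (Fin m) (Fin n) ℝ) (y : Fin m → ℝ)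
    (z : EuclideanSpace ℝ (Fin n)) :
    inner ℝ (toEuc (Aᵀ *ᵥ y)) z = y ⬝ᵥ (A *ᵥ z) := by
  rw [EuclideanSpace.inner_eq_star_dotProduct, toEuc, star_trivial, dotProduct_comm,
    mulVec_transpose, dotProduct_mulVec]

theorem max_zero_mul_self_le_mul {r s : ℝ} (h : r ≤ s) : max 0 r * max 0 r ≤ max 0 r * s := by
  rcases le_total r 0 with hr | hr
  · simp [max_eq_left hr]
  · rw [max_eq_right hr]
    exact mul_le_mul_of_nonneg_left h hr

theorem dotProduct_max_zero_self_le {ι : Type*} [Fintype ι] {v w : ι → ℝ} (h : v ≤ w) :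
    (fun i => max 0 (v i)) ⬝ᵥ (fun i => max 0 (v i)) ≤ (fun i => max 0 (v i)) ⬝ᵥ w :=
  Finset.sum_le_sum fun i _ => max_zero_mul_self_le_mul (h i)

theorem norm_sq_eq_dotProduct_self {ι : Type*} [Fintype ι] (u : EuclideanSpace ℝ ι) :
    ‖u‖ ^ 2 = u.ofLp ⬝ᵥ u.ofLp := by
  rw [← real_inner_self_eq_norm_sq, EuclideanSpace.inner_eq_star_dotProduct, star_trivial]

theorem posRes_eq_zero_of_feasible {m n : ℕ} {A : Matrix (Fin m) (Fin n) ℝ} {b : Fin m → ℝ}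
    {x : EuclideanSpace ℝ (Fin n)} (hx : ∀ i, A.mulVec x i ≤ b i) : posRes A b x = 0 := by
  ext i
  exact max_eq_left (sub_nonpos.mpr (hx i))

theorem hingeSq_eq_zero_of_feasible {m n : ℕ} {A : Matrix (Fin m) (Fin n) ℝ} {b : Fin m → ℝ}
    {x : EuclideanSpace ℝ (Fin n)} (hx : ∀ i, A.mulVec x i ≤ b i) : hingeSq A b x = 0 := by
  simp [hingeSq, posRes_eq_zero_of_feasible hx]

theorem norm_posRes_sq_le_inner {m n : ℕ} {A : Matrix (Fin m) (Fin n) ℝ} {b : Fin m → ℝ}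
    (x : EuclideanSpace ℝ (Fin n)) {xstar : EuclideanSpace ℝ (Fin n)}
    (hfeas : ∀ i, A.mulVec xstar i ≤ b i) :
    ‖posRes A b x‖ ^ 2 ≤ inner ℝ (toEuc (Aᵀ.mulVec (posRes A b x))) (x - xstar) := by
  rw [inner_toEuc_transpose_mulVec, norm_sq_eq_dotProduct_self]
  refine dotProduct_max_zero_self_le fun i => ?_
  simp only [WithLp.ofLp_sub, mulVec_sub, Pi.sub_apply]
  linarith [hfeas i]

theorem hingeSq_quasi_strong_convexity_general {m n : ℕ} (A : Matrix (Fin m) (Fin n) ℝ)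
    (b : Fin m → ℝ) (x xstar : EuclideanSpace ℝ (Fin n))
    (hfeas : ∀ i, A.mulVec xstar i ≤ b i)
    (γ : ℝ)
    (hhoffman : γ / 2 * ‖x - xstar‖ ^ 2 ≤ ‖posRes A b x‖ ^ 2) :
    ‖posRes A b x‖ ^ 2 + γ / 2 * ‖x - xstar‖ ^ 2 ≤
        2 * (inner ℝ (toEuc (Aᵀ.mulVec (posRes A b x))) (x - xstar) : ℝ)
      ∧
    hingeSq A b x - hingeSq A b xstar ≤
        (inner ℝ (toEuc (Aᵀ.mulVec (posRes A b x))) (x - xstar) : ℝ)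
          - γ / 4 * ‖x - xstar‖ ^ 2 := by
  have hkey := norm_posRes_sq_le_inner x hfeas
  rw [hingeSq_eq_zero_of_feasible hfeas, hingeSq]
  constructor <;> linarith

/-- Remark: the hinge-squared loss of a feasible linear system satisfies
Assumption 1: if `A x* ≤ b` componentwise and `γ > 0` satisfies the Hoffman-type bound
`(γ/2) ‖x - x*‖² ≤ ‖(A x - b)₊‖²`, then
`‖(A x - b)₊‖² + (γ/2) ‖x - x*‖² ≤ 2 ⟨Aᵀ (A x - b)₊, x - x*⟩`; in particular
`f(x) = (1/2)‖(A x - b)₊‖²`, whose gradient at `x` is `Aᵀ (A x - b)₊`, satisfies the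
quasi strong convexity condition
`f(x) - f(x*) ≤ ⟨∇f(x), x - x*⟩ - (γ/4) ‖x - x*‖²`. -/
theorem hingeSq_quasi_strong_convexity {m n : ℕ} (A : Matrix (Fin m) (Fin n) ℝ)
    (b : Fin m → ℝ) (x xstar : EuclideanSpace ℝ (Fin n))
    (hfeas : ∀ i, A.mulVec xstar i ≤ b i)
    (γ : ℝ) (hγ : 0 < γ)
    (hhoffman : γ / 2 * ‖x - xstar‖ ^ 2 ≤ ‖posRes A b x‖ ^ 2) :
    ‖posRes A b x‖ ^ 2 + γ / 2 * ‖x - xstar‖ ^ 2 ≤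
        2 * (inner ℝ (toEuc (Aᵀ.mulVec (posRes A b x))) (x - xstar) : ℝ)
      ∧
    hingeSq A b x - hingeSq A b xstar ≤
        (inner ℝ (toEuc (Aᵀ.mulVec (posRes A b x))) (x - xstar) : ℝ)
          - γ / 4 * ‖x - xstar‖ ^ 2 :=
  hingeSq_quasi_strong_convexity_general A b x xstar hfeas γ hhoffman
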